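/- Let n ≥ 2. There exists a shelling F_1, …, F_t (t = 2^n − 1) of the facets of Δ_n such that, defining for each j the restriction number r_j = #{v ∈ F_j : F_j \ {v} ⊆ F_k for some k < j} (so r_1 = 0), one has #{j : r_j = i} = C(n, i) for every i ∈ {0, 2, 3, …, n} and #{j : r_j = 1} = C(n, 1) − 1 = n − 1. Consequently the h-vector of Δ_n is (C(n,0), C(n,1) − 1, C(n,2), …, C(n,n)). -/

import Mathlib

/-- A subset of the vertex set `{xᵢ, yᵢ, zᵢ : 1 ≤ i ≤ n}` (identified with
`Fin n × Fin 3`, where `(i,0) = xᵢ`, `(i,1) = yᵢ`, `(i,2) = zᵢ`) is a face of `Δₙ`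
iff it contains no triple `{xᵢ, yᵢ, z_j}` with `i < j`. -/
def IsFaceOf (n : ℕ) (F : Finset (Fin n × Fin 3)) : Prop :=
  ¬ ∃ i j : Fin n, i < j ∧ (i, 0) ∈ F ∧ (i, 1) ∈ F ∧ (j, 2) ∈ F

/-- A facet of `Δₙ` is a maximal face. -/
def IsFacetOf (n : ℕ) (F : Finset (Fin n × Fin 3)) : Prop :=
  IsFaceOf n F ∧ ∀ G : Finset (Fin n × Fin 3), IsFaceOf n G → F ⊆ G → F = G

/-- `F₁, …, F_t` is an enumeration of the facets of `Δₙ` which is a shelling: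
for all `i < j` there exists `k < j` with `Fᵢ ∩ F_j ⊆ F_k ∩ F_j` and `|F_j \ F_k| = 1`. -/
def IsShelling (n t : ℕ) (F : Fin t → Finset (Fin n × Fin 3)) : Prop :=
  Function.Injective F ∧
  (∀ G : Finset (Fin n × Fin 3), IsFacetOf n G ↔ ∃ k, F k = G) ∧
  ∀ i j : Fin t, i < j → ∃ k, k < j ∧ F i ∩ F j ⊆ F k ∩ F j ∧ (F j \ F k).card = 1

/-- The restriction number `r_j` of the `j`-th facet in a shelling: the number of
vertices `v ∈ F_j` such that `F_j \ {v}` is contained in some earlier facet `F_k`, `k < j`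
(so `r` of the first facet is `0`). -/
noncomputable def restrNum {n t : ℕ} (F : Fin t → Finset (Fin n × Fin 3)) (j : Fin t) : ℕ :=
  Set.ncard {v : Fin n × Fin 3 | v ∈ F j ∧ ∃ k, k < j ∧ (F j).erase v ⊆ F k}

open Finset

def fac (n a : ℕ) (s : ℕ → Bool) : Finset (Fin n × Fin 3) :=
  Finset.univ.filter fun v =>
    (v.2.val = 2 ∧ v.1.val ≤ a) ∨
    (v.2.val = 1 ∧ (a ≤ v.1.val ∨ s v.1.val = true)) ∨
    (v.2.val = 0 ∧ (a ≤ v.1.val ∨ s v.1.val = false))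
lemma mem_fac {n a : ℕ} {s : ℕ → Bool} {i : Fin n} {c : Fin 3} :
    (i, c) ∈ fac n a s ↔
      (c.val = 2 ∧ i.val ≤ a) ∨ (c.val = 1 ∧ (a ≤ i.val ∨ s i.val = true)) ∨
        (c.val = 0 ∧ (a ≤ i.val ∨ s i.val = false)) := by
  simp [fac]
lemma mem_fac_z {n a : ℕ} {s : ℕ → Bool} {i : Fin n} :
    (i, 2) ∈ fac n a s ↔ i.val ≤ a := by simp [mem_fac]
lemma mem_fac_y {n a : ℕ} {s : ℕ → Bool} {i : Fin n} :
    (i, 1) ∈ fac n a s ↔ a ≤ i.val ∨ s i.val = true := by simp [mem_fac]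
lemma mem_fac_x {n a : ℕ} {s : ℕ → Bool} {i : Fin n} :
    (i, 0) ∈ fac n a s ↔ a ≤ i.val ∨ s i.val = false := by simp [mem_fac]

lemma fac_congr {n a : ℕ} {s s' : ℕ → Bool} (h : ∀ i < a, s i = s' i) :
    fac n a s = fac n a s' := by
  ext ⟨i, c⟩
  rw [mem_fac, mem_fac]
  by_cases hia : a ≤ i.val
  · simp [hia]
  · rw [h i.val (by omega)]

lemma isFacet_fac {n a : ℕ} (ha : a < n) (s : ℕ → Bool) : IsFacetOf n (fac n a s) := by
  constructor
  · rintro ⟨i, j, hij, hx, hy, hz⟩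
    rw [mem_fac_x] at hx; rw [mem_fac_y] at hy; rw [mem_fac_z] at hz
    have : i.val < j.val := hij
    rcases hx with h1 | h1 <;> rcases hy with h2 | h2
    · omega
    · omega
    · omega
    · simp [h2] at h1
  · intro G hG hsub
    apply Finset.Subset.antisymm hsub
    intro v hv
    by_contra hnot
    obtain ⟨i, c⟩ := v
    have hzmem : ((⟨a, ha⟩ : Fin n), 2) ∈ fac n a s := by rw [mem_fac_z]
    have hxa : ((⟨a, ha⟩ : Fin n), 0) ∈ fac n a s := by rw [mem_fac_x]; left; rfl
    have hya : ((⟨a, ha⟩ : Fin n), 1) ∈ fac n a s := by rw [mem_fac_y]; left; rfl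
    fin_cases c
    · -- c = 0 : x_i with i < a, s i = true
      rw [show ((i, (fun i => i) (⟨0, by omega⟩ : Fin 3)) : Fin n × Fin 3) = (i, 0) from rfl]
        at hnot hv
      rw [mem_fac_x] at hnot
      push_neg at hnot
      obtain ⟨hia, hsi⟩ := hnot
      have hia' : i.val < a := by omega
      exact hG ⟨i, ⟨a, ha⟩, hia', hv, hsub (by rw [mem_fac_y]; right; simpa using hsi),
        hsub hzmem⟩
    · -- c = 1 : y_i with i < a, s i = false
      rw [show ((i, (fun i => i) (⟨1, by omega⟩ : Fin 3)) : Fin n × Fin 3) = (i, 1) from rfl]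
        at hnot hv
      rw [mem_fac_y] at hnot
      push_neg at hnot
      obtain ⟨hia, hsi⟩ := hnot
      have hia' : i.val < a := by omega
      exact hG ⟨i, ⟨a, ha⟩, hia', hsub (by rw [mem_fac_x]; right; simpa using hsi), hv,
        hsub hzmem⟩
    · -- c = 2 : z_i with i > a
      rw [show ((i, (fun i => i) (⟨2, by omega⟩ : Fin 3)) : Fin n × Fin 3) = (i, 2) from rfl]
        at hnot hv
      rw [mem_fac_z] at hnot
      push_neg at hnot
      exact hG ⟨⟨a, ha⟩, i, hnot, hsub hxa, hsub hya, hv⟩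

lemma facet_eq_fac {n : ℕ} (hn : 1 ≤ n) {G : Finset (Fin n × Fin 3)}
    (hG : IsFacetOf n G) : ∃ a, a < n ∧ ∃ s : ℕ → Bool, G = fac n a s := by
  obtain ⟨hface, hmax⟩ := hG
  -- inserting a vertex not in G creates a violation
  have key : ∀ v : Fin n × Fin 3, v ∉ G →
      ∃ i j : Fin n, i < j ∧ (i, 0) ∈ insert v G ∧ (i, 1) ∈ insert v G ∧
        (j, 2) ∈ insert v G := by
    intro v hv
    by_contra hno
    have : G = insert v G := hmax _ hno (Finset.subset_insert _ _)
    exact hv (this ▸ Finset.mem_insert_self v G)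
  -- any violation from inserting v must involve v
  have key' : ∀ (i : Fin n) (c : Fin 3), (i, c) ∉ G →
      ∃ i' j' : Fin n, i' < j' ∧
        (((i', 0) = ((i, c) : Fin n × Fin 3) ∨ (i', 0) ∈ G)) ∧
        (((i', 1) = ((i, c) : Fin n × Fin 3)) ∨ (i', 1) ∈ G) ∧
        (((j', 2) = ((i, c) : Fin n × Fin 3)) ∨ (j', 2) ∈ G) := by
    intro i c hv
    obtain ⟨i', j', h1, h2, h3, h4⟩ := key (i, c) hv
    exact ⟨i', j', h1, Finset.mem_insert.mp h2, Finset.mem_insert.mp h3,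
      Finset.mem_insert.mp h4⟩
  have hlast : n - 1 < n := by omega
  set N : Fin n := ⟨n - 1, hlast⟩ with hN
  -- step 1 : both x_{n-1}, y_{n-1} ∈ G
  have hx1 : ∀ c : Fin 3, c.val ≠ 2 → (N, c) ∈ G := by
    intro c hc
    by_contra hnc
    obtain ⟨i', j', h1, h2, h3, h4⟩ := key' N c hnc
    have hj' : j'.val ≤ n - 1 := by omega
    have hz : (j', 2) ∈ G := by
      rcases h4 with h | h
      · exfalso; apply hc; rw [Prod.ext_iff] at h; exact (congrArg Fin.val h.2.symm)
      · exact h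
    have hxx : (i', 0) ∈ G := by
      rcases h2 with h | h
      · exfalso
        rw [Prod.ext_iff] at h
        have : i' = N := h.1
        have : i'.val = n - 1 := by rw [this]
        have h1' : i'.val < j'.val := h1
        omega
      · exact h
    have hyy : (i', 1) ∈ G := by
      rcases h3 with h | h
      · exfalso
        rw [Prod.ext_iff] at h
        have : i' = N := h.1
        have : i'.val = n - 1 := by rw [this]
        have h1' : i'.val < j'.val := h1
        omega
      · exact h
    exact hface ⟨i', j', h1, hxx, hyy, hz⟩
  have hxN : (N, 0) ∈ G := hx1 0 (by decide)
  have hyN : (N, 1) ∈ G := hx1 1 (by decide)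
  -- the set of indices with both x and y present
  set A : Finset (Fin n) := Finset.univ.filter (fun i => (i, 0) ∈ G ∧ (i, 1) ∈ G) with hA
  have hAne : A.Nonempty := ⟨N, by simp [hA, hxN, hyN]⟩
  set a0 : Fin n := A.min' hAne with ha0
  have hpair_a : (a0, 0) ∈ G ∧ (a0, 1) ∈ G := by
    exact (Finset.mem_filter.mp (A.min'_mem hAne)).2
  have hmin : ∀ i : Fin n, (i, 0) ∈ G → (i, 1) ∈ G → a0 ≤ i := by
    intro i h1 h2
    exact A.min'_le i (Finset.mem_filter.mpr ⟨Finset.mem_univ i, h1, h2⟩)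
  have z_not : ∀ j : Fin n, a0 < j → (j, 2) ∉ G := by
    intro j hj hmem
    exact hface ⟨a0, j, hj, hpair_a.1, hpair_a.2, hmem⟩
  have z_in : ∀ j : Fin n, j ≤ a0 → (j, 2) ∈ G := by
    intro j hj
    by_contra hnot
    obtain ⟨i', j', h1, h2, h3, h4⟩ := key' j 2 hnot
    have hxx : (i', 0) ∈ G := by
      rcases h2 with h | h
      · exact absurd (congrArg (Fin.val ∘ Prod.snd) h) (by norm_num)
      · exact h
    have hyy : (i', 1) ∈ G := by
      rcases h3 with h | h
      · exact absurd (congrArg (Fin.val ∘ Prod.snd) h) (by norm_num)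
      · exact h
    rcases h4 with h | h
    · have hj' : j' = j := (Prod.ext_iff.mp h).1
      have : a0 ≤ i' := hmin i' hxx hyy
      have h1' : i' < j' := h1
      rw [hj'] at h1'
      exact absurd (lt_of_lt_of_le h1' (le_trans hj this)) (lt_irrefl i')
    · exact hface ⟨i', j', h1, hxx, hyy, h⟩
  have pair_in : ∀ i : Fin n, a0 ≤ i → (i, 0) ∈ G ∧ (i, 1) ∈ G := by
    intro i hi
    constructor
    · by_contra hnot
      obtain ⟨i', j', h1, h2, h3, h4⟩ := key' i 0 hnot
      have hyy : (i', 1) ∈ G := by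
        rcases h3 with h | h
        · exact absurd (congrArg (Fin.val ∘ Prod.snd) h) (by norm_num)
        · exact h
      have hz : (j', 2) ∈ G := by
        rcases h4 with h | h
        · exact absurd (congrArg (Fin.val ∘ Prod.snd) h) (by norm_num)
        · exact h
      have hj' : j' ≤ a0 := le_of_not_gt (fun hc => z_not j' hc hz)
      rcases h2 with h | h
      · have : i' = i := (Prod.ext_iff.mp h).1
        subst this
        exact absurd (lt_of_lt_of_le h1 (le_trans hj' hi)) (lt_irrefl i')
      · have : a0 ≤ i' := hmin i' h hyy
        exact absurd (lt_of_le_of_lt this (lt_of_lt_of_le h1 hj')) (lt_irrefl a0)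
    · by_contra hnot
      obtain ⟨i', j', h1, h2, h3, h4⟩ := key' i 1 hnot
      have hxx : (i', 0) ∈ G := by
        rcases h2 with h | h
        · exact absurd (congrArg (Fin.val ∘ Prod.snd) h) (by norm_num)
        · exact h
      have hz : (j', 2) ∈ G := by
        rcases h4 with h | h
        · exact absurd (congrArg (Fin.val ∘ Prod.snd) h) (by norm_num)
        · exact h
      have hj' : j' ≤ a0 := le_of_not_gt (fun hc => z_not j' hc hz)
      rcases h3 with h | h
      · have : i' = i := (Prod.ext_iff.mp h).1
        subst this
        exact absurd (lt_of_lt_of_le h1 (le_trans hj' hi)) (lt_irrefl i')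
      · have : a0 ≤ i' := hmin i' hxx h
        exact absurd (lt_of_le_of_lt this (lt_of_lt_of_le h1 hj')) (lt_irrefl a0)
  have one_of : ∀ i : Fin n, i < a0 → ((i, 0) ∈ G ↔ (i, 1) ∉ G) := by
    intro i hi
    constructor
    · intro h0 h1
      exact absurd (lt_of_lt_of_le hi (hmin i h0 h1)) (lt_irrefl i)
    · intro h1
      by_contra h0
      obtain ⟨i', j', hlt, h2, h3, h4⟩ := key' i 0 h0
      have hyy : (i', 1) ∈ G := by
        rcases h3 with h | h
        · exact absurd (congrArg (Fin.val ∘ Prod.snd) h) (by norm_num)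
        · exact h
      have hz : (j', 2) ∈ G := by
        rcases h4 with h | h
        · exact absurd (congrArg (Fin.val ∘ Prod.snd) h) (by norm_num)
        · exact h
      have hj' : j' ≤ a0 := le_of_not_gt (fun hc => z_not j' hc hz)
      rcases h2 with h | h
      · have : i' = i := (Prod.ext_iff.mp h).1
        subst this
        exact h1 hyy
      · have : a0 ≤ i' := hmin i' h hyy
        exact absurd (lt_of_le_of_lt this (lt_of_lt_of_le hlt hj')) (lt_irrefl a0)
  refine ⟨a0.val, a0.isLt, fun m => if h : m < n then decide (((⟨m, h⟩ : Fin n), 1) ∈ G)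
    else false, ?_⟩
  ext ⟨i, c⟩
  have hsi : (if h : i.val < n then decide (((⟨i.val, h⟩ : Fin n), 1) ∈ G) else false)
      = decide ((i, 1) ∈ G) := by
    rw [dif_pos i.isLt]
  fin_cases c
  · rw [show ((i, (fun i => i) (⟨0, by omega⟩ : Fin 3)) : Fin n × Fin 3) = (i, 0) from rfl]
    rw [mem_fac_x, hsi]
    constructor
    · intro h
      rcases le_or_gt a0.val i.val with hle | hlt
      · exact Or.inl hle
      · right
        rw [decide_eq_false_iff_not]
        exact (one_of i hlt).mp h
    · rintro (h | h)
      · exact (pair_in i h).1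
      rcases le_or_gt a0.val i.val with hle | hlt
      · exact (pair_in i hle).1
      · rw [decide_eq_false_iff_not] at h
        exact (one_of i hlt).mpr h
  · rw [show ((i, (fun i => i) (⟨1, by omega⟩ : Fin 3)) : Fin n × Fin 3) = (i, 1) from rfl]
    rw [mem_fac_y, hsi]
    constructor
    · intro h
      exact Or.inr (decide_eq_true h)
    · rintro (h | h)
      · exact (pair_in i h).2
      · exact of_decide_eq_true h
  · rw [show ((i, (fun i => i) (⟨2, by omega⟩ : Fin 3)) : Fin n × Fin 3) = (i, 2) from rfl]
    rw [mem_fac_z]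
    constructor
    · intro h
      exact le_of_not_gt (fun hc => z_not i hc h)
    · intro h
      exact z_in i h


lemma testBit_log {M : ℕ} (h : M ≠ 0) : Nat.testBit M (Nat.log 2 M) = true := by
  have h1 := Nat.pow_log_le_self 2 h
  have h2 := Nat.lt_pow_succ_log_self (b := 2) one_lt_two M
  rw [Nat.testBit_eq_decide_div_mod_eq]
  have hd : M / 2 ^ Nat.log 2 M = 1 := by
    have hp := Nat.two_pow_pos (Nat.log 2 M)
    have h2' : M < 2 ^ Nat.log 2 M * 2 := by
      rw [pow_succ] at h2; omega
    have hlo : 1 ≤ M / 2 ^ Nat.log 2 M := (Nat.le_div_iff_mul_le hp).mpr (by omega)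
    have hhi : M / 2 ^ Nat.log 2 M < 2 := (Nat.div_lt_iff_lt_mul hp).mpr (by omega)
    omega
  simp [hd]

lemma testBit_false_of_log_lt {M i : ℕ} (h : Nat.log 2 M < i) : Nat.testBit M i = false := by
  rcases Nat.eq_zero_or_pos M with rfl | hM
  · simp
  apply Nat.testBit_lt_two_pow
  have h2 := Nat.lt_pow_succ_log_self (b := 2) one_lt_two M
  calc M < 2 ^ (Nat.log 2 M + 1) := h2
    _ ≤ 2 ^ i := Nat.pow_le_pow_right (by norm_num) (by omega)

lemma log_lt_of_lt_pow {M n : ℕ} (h1 : 1 ≤ M) (h2 : M < 2 ^ n) : Nat.log 2 M < n := by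
  by_contra hc
  push_neg at hc
  have := Nat.pow_log_le_self 2 (by omega : M ≠ 0)
  have : (2:ℕ) ^ n ≤ 2 ^ Nat.log 2 M := Nat.pow_le_pow_right (by norm_num) hc
  omega

lemma testBit_two_pow_add' {a x : ℕ} (hx : Nat.testBit x a = false) (j : ℕ) :
    Nat.testBit (2 ^ a + x) j = (Nat.testBit x j || decide (j = a)) := by
  rcases lt_trichotomy j a with h | h | h
  · rw [Nat.testBit_two_pow_add_gt h]
    simp [Nat.ne_of_lt h]
  · subst h
    rw [Nat.testBit_two_pow_add_eq, hx]
    simp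
  · -- j > a
    have hxd : 2 ^ (a+1) * (x / 2 ^ (a+1)) + x % 2 ^ (a+1) = x := Nat.div_add_mod x (2 ^ (a+1))
    have hrlt : x % 2 ^ (a+1) < 2 ^ a := by
      have hb : Nat.testBit (x % 2 ^ (a+1)) a = false := by
        rw [Nat.testBit_mod_two_pow]
        simp [hx]
      have hlt : x % 2 ^ (a+1) < 2 ^ (a+1) := Nat.mod_lt _ (Nat.two_pow_pos _)
      by_contra hc
      push_neg at hc
      have hd : x % 2 ^ (a+1) / 2 ^ a = 1 := by
        have hp := Nat.two_pow_pos a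
        have h2' : x % 2 ^ (a+1) < 2 ^ a * 2 := by rw [pow_succ] at hlt; omega
        have hlo : 1 ≤ x % 2 ^ (a+1) / 2 ^ a := (Nat.le_div_iff_mul_le hp).mpr (by omega)
        have hhi : x % 2 ^ (a+1) / 2 ^ a < 2 := (Nat.div_lt_iff_lt_mul hp).mpr (by omega)
        omega
      rw [Nat.testBit_eq_decide_div_mod_eq, hd] at hb
      simp at hb
    have key : 2 ^ a + x = 2 ^ (a+1) * (x / 2 ^ (a+1)) + (x % 2 ^ (a+1) + 2 ^ a) := by
      conv_lhs => rw [← hxd]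
      ring
    have h1 : Nat.testBit (2 ^ a + x) j = Nat.testBit (x / 2 ^ (a+1)) (j - (a+1)) := by
      rw [key, Nat.testBit_two_pow_mul_add _ (show x % 2 ^ (a+1) + 2 ^ a < 2 ^ (a+1) by
        have h2p : (2:ℕ) ^ (a+1) = 2 ^ a * 2 := pow_succ 2 a
        omega)]
      simp [Nat.not_lt.mpr (by omega : a + 1 ≤ j)]
    have h2 : Nat.testBit x j = Nat.testBit (x / 2 ^ (a+1)) (j - (a+1)) := by
      conv_lhs => rw [← hxd]
      rw [Nat.testBit_two_pow_mul_add _ (Nat.mod_lt _ (Nat.two_pow_pos _))]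
      simp [Nat.not_lt.mpr (by omega : a + 1 ≤ j)]
    rw [h1, h2]
    simp [Nat.ne_of_gt h]

lemma testBit_sum_pow (S : Finset ℕ) (j : ℕ) :
    Nat.testBit (∑ i ∈ S, 2 ^ i) j = decide (j ∈ S) := by
  induction S using Finset.induction_on generalizing j with
  | empty => simp
  | insert a S' ha ih =>
    rw [Finset.sum_insert ha]
    have hb : Nat.testBit (∑ i ∈ S', 2 ^ i) a = false := by rw [ih]; simp [ha]
    rw [testBit_two_pow_add' hb, ih]
    by_cases hj : j = a <;> simp [hj, Finset.mem_insert]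

lemma sum_pow_lt {S : Finset ℕ} {n : ℕ} (h : S ⊆ Finset.range n) :
    ∑ i ∈ S, 2 ^ i < 2 ^ n := by
  calc ∑ i ∈ S, 2 ^ i ≤ ∑ i ∈ Finset.range n, 2 ^ i :=
        Finset.sum_le_sum_of_subset h
    _ = 2 ^ n - 1 := by
        clear h
        induction n with
        | zero => simp
        | succ m ihm => rw [Finset.sum_range_succ, ihm]; have := Nat.one_le_two_pow (n := m); omega
    _ < 2 ^ n := by have := Nat.one_le_two_pow (n := n); omega

def Fm (n M : ℕ) : Finset (Fin n × Fin 3) := fac n (Nat.log 2 M) (fun i => Nat.testBit M i)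

lemma Fm_def (n M : ℕ) : Fm n M = fac n (Nat.log 2 M) (fun i => Nat.testBit M i) := rfl

lemma Fm_inj {n M M' : ℕ} (h1 : 1 ≤ M) (h1' : 1 ≤ M') (h2 : M < 2 ^ n) (h2' : M' < 2 ^ n)
    (hF : Fm n M = Fm n M') : M = M' := by
  have han : Nat.log 2 M < n := log_lt_of_lt_pow h1 h2
  have han' : Nat.log 2 M' < n := log_lt_of_lt_pow h1' h2'
  have haa : Nat.log 2 M = Nat.log 2 M' := by
    have m1 : ((⟨Nat.log 2 M, han⟩ : Fin n), 2) ∈ Fm n M := by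
      rw [Fm_def]; exact mem_fac_z.mpr le_rfl
    rw [hF, Fm_def] at m1
    have l1 := mem_fac_z.mp m1
    have m2 : ((⟨Nat.log 2 M', han'⟩ : Fin n), 2) ∈ Fm n M' := by
      rw [Fm_def]; exact mem_fac_z.mpr le_rfl
    rw [← hF, Fm_def] at m2
    have l2 := mem_fac_z.mp m2
    simp only at l1 l2
    omega
  apply Nat.eq_of_testBit_eq
  intro l
  rcases lt_trichotomy l (Nat.log 2 M) with hl | hl | hl
  · have hln : l < n := by omega
    have hiff : (((⟨l, hln⟩ : Fin n), 1) ∈ Fm n M) ↔ (((⟨l, hln⟩ : Fin n), 1) ∈ Fm n M') := by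
      rw [hF]
    rw [Fm_def, Fm_def, mem_fac_y, mem_fac_y] at hiff
    simp only at hiff
    cases hM : Nat.testBit M l <;> cases hM' : Nat.testBit M' l <;>
      simp [hM, hM', Nat.not_le.mpr hl, ← haa] at hiff ⊢
  · subst hl
    rw [testBit_log (by omega), haa, testBit_log (by omega)]
  · rw [testBit_false_of_log_lt hl, testBit_false_of_log_lt (by omega : Nat.log 2 M' < l)]

lemma exists_M {n a : ℕ} (ha : a < n) (s : ℕ → Bool) :
    ∃ M, 1 ≤ M ∧ M < 2 ^ n ∧ Fm n M = fac n a s := by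
  classical
  set S : Finset ℕ := insert a ((Finset.range a).filter (fun i => s i = true)) with hS
  set M := ∑ i ∈ S, 2 ^ i with hM
  have hbit : ∀ j, Nat.testBit M j = decide (j ∈ S) := fun j => testBit_sum_pow S j
  have hSr : S ⊆ Finset.range (a + 1) := by
    intro x hx
    rw [hS, Finset.mem_insert] at hx
    rcases hx with rfl | hx
    · simp
    · rw [Finset.mem_filter, Finset.mem_range] at hx
      rw [Finset.mem_range]
      omega
  have hMlt : M < 2 ^ (a + 1) := sum_pow_lt hSr
  have hMge : 2 ^ a ≤ M := Finset.single_le_sum (f := fun i => (2:ℕ) ^ i)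
    (fun i _ => Nat.zero_le _) (by rw [hS]; exact Finset.mem_insert_self a _)
  have hlog : Nat.log 2 M = a := Nat.log_eq_of_pow_le_of_lt_pow hMge hMlt
  have h2n : M < 2 ^ n := lt_of_lt_of_le hMlt (Nat.pow_le_pow_right (by norm_num) ha)
  have h1M : 1 ≤ M := le_trans (Nat.one_le_two_pow) hMge
  refine ⟨M, h1M, h2n, ?_⟩
  rw [Fm_def, hlog]
  apply fac_congr
  intro i hi
  rw [hbit]
  have hiff : i ∈ S ↔ s i = true := by
    simp only [hS, Finset.mem_insert, Finset.mem_filter, Finset.mem_range]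
    constructor
    · rintro (rfl | ⟨_, h⟩)
      · omega
      · exact h
    · intro h; exact Or.inr ⟨hi, h⟩
  cases hsi : s i
  · have hns : i ∉ S := fun h => by rw [hsi] at hiff; exact absurd (hiff.mp h) (by simp)
    simp [hns]
  · have hs' : i ∈ S := hiff.mpr hsi
    simp [hs']

def FF (n : ℕ) : Fin (2 ^ n - 1) → Finset (Fin n × Fin 3) := fun j => Fm n (j.val + 1)

lemma FF_M_lt {n : ℕ} (j : Fin (2 ^ n - 1)) : j.val + 1 < 2 ^ n := by
  have := j.isLt
  have h2 := Nat.one_le_two_pow (n := n)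
  omega

lemma FF_log_lt {n : ℕ} (j : Fin (2 ^ n - 1)) : Nat.log 2 (j.val + 1) < n :=
  log_lt_of_lt_pow (by omega) (FF_M_lt j)

lemma FF_inj {n : ℕ} : Function.Injective (FF n) := by
  intro i j h
  have := Fm_inj (n := n) (by omega) (by omega) (FF_M_lt i) (FF_M_lt j) h
  exact Fin.ext (by omega)

lemma FF_surj {n : ℕ} (hn : 1 ≤ n) (G : Finset (Fin n × Fin 3)) :
    IsFacetOf n G ↔ ∃ k : Fin (2 ^ n - 1), FF n k = G := by
  constructor
  · intro hG
    obtain ⟨a, ha, s, rfl⟩ := facet_eq_fac hn hG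
    obtain ⟨M, h1, h2, h3⟩ := exists_M ha s
    refine ⟨⟨M - 1, by omega⟩, ?_⟩
    show Fm n (M - 1 + 1) = _
    rw [show M - 1 + 1 = M by omega]
    exact h3
  · rintro ⟨k, rfl⟩
    show IsFacetOf n (Fm n (k.val + 1))
    rw [Fm_def]
    exact isFacet_fac (FF_log_lt k) _

lemma sdiff_z {n b : ℕ} (hb : b < n) (hb1 : 1 ≤ b) (δ : ℕ → Bool) :
    fac n b δ \ fac n (b - 1) δ = {((⟨b, hb⟩ : Fin n), 2)} := by
  ext ⟨i, c⟩
  rw [Finset.mem_sdiff, Finset.mem_singleton]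
  fin_cases c
  · rw [show ((i, (fun i => i) (⟨0, by omega⟩ : Fin 3)) : Fin n × Fin 3) = (i, 0) from rfl]
    rw [mem_fac_x, mem_fac_x]
    constructor
    · rintro ⟨h1, h2⟩
      push_neg at h2
      obtain ⟨h2a, h2b⟩ := h2
      rcases h1 with h | h
      · omega
      · rw [h] at h2b; exact absurd h2b (by simp)
    · intro h
      exact absurd (congrArg (fun p : Fin n × Fin 3 => p.2.val) h) (by simp)
  · rw [show ((i, (fun i => i) (⟨1, by omega⟩ : Fin 3)) : Fin n × Fin 3) = (i, 1) from rfl]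
    rw [mem_fac_y, mem_fac_y]
    constructor
    · rintro ⟨h1, h2⟩
      push_neg at h2
      obtain ⟨h2a, h2b⟩ := h2
      rcases h1 with h | h
      · omega
      · rw [h] at h2b; exact absurd h2b (by simp)
    · intro h
      exact absurd (congrArg (fun p : Fin n × Fin 3 => p.2.val) h) (by simp)
  · rw [show ((i, (fun i => i) (⟨2, by omega⟩ : Fin 3)) : Fin n × Fin 3) = (i, 2) from rfl]
    rw [mem_fac_z, mem_fac_z]
    constructor
    · rintro ⟨h1, h2⟩
      push_neg at h2
      have : i.val = b := by omega
      rw [Prod.ext_iff]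
      exact ⟨Fin.ext this, rfl⟩
    · intro h
      have : i = ⟨b, hb⟩ := (Prod.ext_iff.mp h).1
      rw [this]
      constructor
      · exact le_rfl
      · simp; omega

lemma sdiff_flip {n b : ℕ} (hb : b < n) {δ δ' : ℕ → Bool} {i0 : ℕ} (hi0 : i0 < b)
    (hδ : δ i0 = true) (hδ' : δ' i0 = false) (hagree : ∀ i, i ≠ i0 → δ i = δ' i) :
    fac n b δ \ fac n b δ' = {((⟨i0, by omega⟩ : Fin n), 1)} := by
  ext ⟨i, c⟩
  rw [Finset.mem_sdiff, Finset.mem_singleton]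
  fin_cases c
  · rw [show ((i, (fun i => i) (⟨0, by omega⟩ : Fin 3)) : Fin n × Fin 3) = (i, 0) from rfl]
    rw [mem_fac_x, mem_fac_x]
    constructor
    · rintro ⟨h1, h2⟩
      push_neg at h2
      obtain ⟨h2a, h2b⟩ := h2
      exfalso
      rcases h1 with h | h
      · omega
      · rcases eq_or_ne i.val i0 with he | he
        · rw [he, hδ] at h; exact absurd h (by simp)
        · rw [hagree i.val he] at h; exact h2b h
    · intro h
      exact absurd (congrArg (fun p : Fin n × Fin 3 => p.2.val) h) (by simp)
  · rw [show ((i, (fun i => i) (⟨1, by omega⟩ : Fin 3)) : Fin n × Fin 3) = (i, 1) from rfl]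
    rw [mem_fac_y, mem_fac_y]
    constructor
    · rintro ⟨h1, h2⟩
      push_neg at h2
      obtain ⟨h2a, h2b⟩ := h2
      have he : i.val = i0 := by
        by_contra he
        rcases h1 with h | h
        · omega
        · rw [hagree i.val he] at h
          rw [h] at h2b
          exact absurd h2b (by simp)
      rw [Prod.ext_iff]
      exact ⟨Fin.ext he, rfl⟩
    · intro h
      have : i = ⟨i0, by omega⟩ := (Prod.ext_iff.mp h).1
      rw [this]
      constructor
      · right; exact hδ
      · push_neg
        refine ⟨by simpa using hi0, by simpa using hδ'⟩
  · rw [show ((i, (fun i => i) (⟨2, by omega⟩ : Fin 3)) : Fin n × Fin 3) = (i, 2) from rfl]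
    rw [mem_fac_z, mem_fac_z]
    constructor
    · rintro ⟨h1, h2⟩
      exact absurd h1 h2
    · intro h
      exact absurd (congrArg (fun p : Fin n × Fin 3 => p.2.val) h) (by simp)

lemma xor_high_agree {Mi Mj : ℕ} (hne : Mi ≠ Mj) :
    ∀ l, Nat.log 2 (Mi ^^^ Mj) < l → Nat.testBit Mi l = Nat.testBit Mj l := by
  intro l hl
  have hD : Nat.testBit (Mi ^^^ Mj) l = false := testBit_false_of_log_lt hl
  rw [Nat.testBit_xor] at hD
  cases h1 : Nat.testBit Mi l <;> cases h2 : Nat.testBit Mj l <;> simp_all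

lemma FF_shelling {n : ℕ} (i j : Fin (2 ^ n - 1)) (hij : i < j) :
    ∃ k, k < j ∧ FF n i ∩ FF n j ⊆ FF n k ∩ FF n j ∧ (FF n j \ FF n k).card = 1 := by
  have hMj_lt := FF_M_lt j
  have hMi_lt := FF_M_lt i
  have hbn : Nat.log 2 (j.val + 1) < n := FF_log_lt j
  have hij' : i.val + 1 < j.val + 1 := by exact_mod_cast Nat.add_lt_add_right hij 1
  have hab : Nat.log 2 (i.val + 1) ≤ Nat.log 2 (j.val + 1) := Nat.log_mono_right (by omega)
  have hFFj : FF n j = fac n (Nat.log 2 (j.val + 1)) (fun l => Nat.testBit (j.val + 1) l) := rfl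
  have hFFi : FF n i = fac n (Nat.log 2 (i.val + 1)) (fun l => Nat.testBit (i.val + 1) l) := rfl
  rcases eq_or_lt_of_le hab with heq | hlt
  · -- same log; flip the highest differing bit (which is set in Mj)
    set Mi := i.val + 1 with hMi
    set Mj := j.val + 1 with hMjd
    set b := Nat.log 2 Mj with hbd
    have hne : Mi ≠ Mj := by omega
    have hD0 : Mi ^^^ Mj ≠ 0 := fun h => hne (by simpa using h)
    set i0 := Nat.log 2 (Mi ^^^ Mj) with hi0d
    have hbitD : Nat.testBit (Mi ^^^ Mj) i0 = true := testBit_log hD0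
    have hdiff : Nat.testBit Mi i0 ≠ Nat.testBit Mj i0 := by
      rw [Nat.testBit_xor] at hbitD
      intro h
      rw [h] at hbitD
      simp at hbitD
    have hhigh := xor_high_agree hne
    have hMj_i0 : Nat.testBit Mj i0 = true := by
      by_contra hc
      have hMi_i0 : Nat.testBit Mi i0 = true := by
        cases h : Nat.testBit Mi i0
        · rw [h] at hdiff; cases hc' : Nat.testBit Mj i0 <;> simp_all
        · rfl
      have : Mj < Mi := Nat.lt_of_testBit i0 (by simpa using hc) hMi_i0
        (fun l hl => (hhigh l hl).symm)
      omega
    have hbi : Nat.testBit Mi b = true := by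
      have := testBit_log (show Mi ≠ 0 by omega)
      rwa [heq] at this
    have hbj : Nat.testBit Mj b = true := testBit_log (by omega)
    have hi0b : i0 < b := by
      rcases lt_trichotomy i0 b with h | h | h
      · exact h
      · exfalso; apply hdiff; rw [h, hbi, hbj]
      · exfalso
        have : Nat.testBit Mj i0 = false := testBit_false_of_log_lt h
        rw [this] at hMj_i0; exact absurd hMj_i0 (by simp)
    set Mk := Mj ^^^ 2 ^ i0 with hMkd
    have hbitk : ∀ l, Nat.testBit Mk l = if l = i0 then false else Nat.testBit Mj l := by
      intro l
      rw [hMkd, Nat.testBit_xor, Nat.testBit_two_pow]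
      rcases eq_or_ne l i0 with rfl | hne'
      · simp [hMj_i0]
      · simp [Ne.symm hne', hne']
    have hMk_lt : Mk < Mj := by
      apply Nat.lt_of_testBit i0
      · rw [hbitk]; simp
      · exact hMj_i0
      · intro l hl
        rw [hbitk]
        simp [Nat.ne_of_gt hl]
    have hbkb : Nat.testBit Mk b = true := by
      rw [hbitk]; simp [Nat.ne_of_gt hi0b, hbj]
    have hMk_ge : 2 ^ b ≤ Mk := Nat.ge_two_pow_of_testBit hbkb
    have hMk1 : 1 ≤ Mk := le_trans Nat.one_le_two_pow hMk_ge
    have hMk_pow : Mk < 2 ^ (b + 1) := by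
      apply Nat.lt_pow_two_of_testBit
      intro l hl
      rw [hbitk]
      have h1 : Nat.testBit Mj l = false := testBit_false_of_log_lt (by omega)
      simp [h1]
    have hlogk : Nat.log 2 Mk = b := Nat.log_eq_of_pow_le_of_lt_pow hMk_ge hMk_pow
    refine ⟨⟨Mk - 1, by omega⟩, by simp [Fin.lt_def]; omega, ?_, ?_⟩
    · intro v hv
      rw [Finset.mem_inter] at hv ⊢
      refine ⟨?_, hv.2⟩
      by_contra hnk
      have hv_sd : v ∈ FF n j \ FF n ⟨Mk - 1, by omega⟩ := Finset.mem_sdiff.mpr ⟨hv.2, hnk⟩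
      have hFk : FF n ⟨Mk - 1, by omega⟩ = fac n b (fun l => Nat.testBit Mk l) := by
        show Fm n (Mk - 1 + 1) = _
        rw [show Mk - 1 + 1 = Mk by omega, Fm_def, hlogk]
      rw [hFFj, hFk] at hv_sd
      rw [sdiff_flip hbn hi0b hMj_i0 (by rw [hbitk]; simp)
        (fun l hl => by rw [hbitk]; simp [hl]) ] at hv_sd
      rw [Finset.mem_singleton] at hv_sd
      have hvi := hv.1
      rw [hv_sd, hFFi, mem_fac_y] at hvi
      rcases hvi with h | h
      · simp only at h; omega
      · simp only at h
        have : Nat.testBit Mi i0 = false := by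
          cases hmi : Nat.testBit Mi i0
          · rfl
          · exfalso; exact hdiff (by rw [hmi, hMj_i0])
        rw [h] at this; exact absurd this (by simp)
    · have hFk : FF n ⟨Mk - 1, by omega⟩ = fac n b (fun l => Nat.testBit Mk l) := by
        show Fm n (Mk - 1 + 1) = _
        rw [show Mk - 1 + 1 = Mk by omega, Fm_def, hlogk]
      rw [hFFj, hFk, sdiff_flip hbn hi0b hMj_i0 (by rw [hbitk]; simp)
        (fun l hl => by rw [hbitk]; simp [hl])]
      exact Finset.card_singleton _
  · -- log 2 Mi < log 2 Mj : drop the top z vertex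
    set Mj := j.val + 1 with hMjd
    set b := Nat.log 2 Mj with hbd
    have hb1 : 1 ≤ b := by omega
    have hpow : (2:ℕ) ^ (b - 1) * 2 = 2 ^ b := by
      rw [← pow_succ]; congr 1; omega
    set Mk := 2 ^ (b - 1) + Mj % 2 ^ (b - 1) with hMkd
    have hmod : Mj % 2 ^ (b - 1) < 2 ^ (b - 1) := Nat.mod_lt _ (Nat.two_pow_pos _)
    have hMk_pow : Mk < 2 ^ b := by omega
    have hMk_ge : 2 ^ (b - 1) ≤ Mk := by omega
    have hMk1 : 1 ≤ Mk := le_trans Nat.one_le_two_pow hMk_ge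
    have hlogk : Nat.log 2 Mk = b - 1 := by
      apply Nat.log_eq_of_pow_le_of_lt_pow hMk_ge
      rw [show b - 1 + 1 = b by omega]
      exact hMk_pow
    have hMk_lt : Mk < Mj := lt_of_lt_of_le hMk_pow (Nat.pow_log_le_self 2 (by omega))
    have hFk : FF n ⟨Mk - 1, by omega⟩ = fac n (b - 1) (fun l => Nat.testBit Mj l) := by
      show Fm n (Mk - 1 + 1) = _
      rw [show Mk - 1 + 1 = Mk by omega, Fm_def, hlogk]
      apply fac_congr
      intro l hl
      rw [hMkd, Nat.testBit_two_pow_add_gt hl, Nat.testBit_mod_two_pow]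
      simp [hl]
    refine ⟨⟨Mk - 1, by omega⟩, by simp [Fin.lt_def]; omega, ?_, ?_⟩
    · intro v hv
      rw [Finset.mem_inter] at hv ⊢
      refine ⟨?_, hv.2⟩
      by_contra hnk
      have hv_sd : v ∈ FF n j \ FF n ⟨Mk - 1, by omega⟩ := Finset.mem_sdiff.mpr ⟨hv.2, hnk⟩
      rw [hFFj, hFk, sdiff_z hbn hb1] at hv_sd
      rw [Finset.mem_singleton] at hv_sd
      have hvi := hv.1
      rw [hv_sd, hFFi, mem_fac_z] at hvi
      simp only at hvi
      omega
    · rw [hFFj, hFk, sdiff_z hbn hb1]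
      exact Finset.card_singleton _

lemma flip_facts {M i0 : ℕ} (hM : 1 ≤ M) (hi0 : i0 < Nat.log 2 M)
    (hbit : Nat.testBit M i0 = true) :
    (∀ l, Nat.testBit (M ^^^ 2 ^ i0) l = if l = i0 then false else Nat.testBit M l) ∧
      1 ≤ M ^^^ 2 ^ i0 ∧ M ^^^ 2 ^ i0 < M ∧ Nat.log 2 (M ^^^ 2 ^ i0) = Nat.log 2 M := by
  set b := Nat.log 2 M with hbd
  have hbitk : ∀ l, Nat.testBit (M ^^^ 2 ^ i0) l = if l = i0 then false else Nat.testBit M l := by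
    intro l
    rw [Nat.testBit_xor, Nat.testBit_two_pow]
    rcases eq_or_ne l i0 with rfl | hne'
    · simp [hbit]
    · simp [Ne.symm hne', hne']
  have hbj : Nat.testBit M b = true := testBit_log (by omega)
  have hbkb : Nat.testBit (M ^^^ 2 ^ i0) b = true := by
    rw [hbitk]; simp [Nat.ne_of_gt hi0, hbj]
  have hMk_ge : 2 ^ b ≤ M ^^^ 2 ^ i0 := Nat.ge_two_pow_of_testBit hbkb
  have hMk1 : 1 ≤ M ^^^ 2 ^ i0 := le_trans Nat.one_le_two_pow hMk_ge
  have hMk_lt : M ^^^ 2 ^ i0 < M := by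
    apply Nat.lt_of_testBit i0
    · rw [hbitk]; simp
    · exact hbit
    · intro l hl
      rw [hbitk]
      simp [Nat.ne_of_gt hl]
  have hMk_pow : M ^^^ 2 ^ i0 < 2 ^ (b + 1) := by
    apply Nat.lt_pow_two_of_testBit
    intro l hl
    rw [hbitk]
    have h1 : Nat.testBit M l = false := testBit_false_of_log_lt (by omega)
    simp [h1]
  exact ⟨hbitk, hMk1, hMk_lt, Nat.log_eq_of_pow_le_of_lt_pow hMk_ge hMk_pow⟩

lemma down_facts {M : ℕ} (hb1 : 1 ≤ Nat.log 2 M) (hM : 1 ≤ M) :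
    1 ≤ 2 ^ (Nat.log 2 M - 1) + M % 2 ^ (Nat.log 2 M - 1) ∧
    2 ^ (Nat.log 2 M - 1) + M % 2 ^ (Nat.log 2 M - 1) < M ∧
    Nat.log 2 (2 ^ (Nat.log 2 M - 1) + M % 2 ^ (Nat.log 2 M - 1)) = Nat.log 2 M - 1 ∧
    ∀ l, l < Nat.log 2 M - 1 →
      Nat.testBit (2 ^ (Nat.log 2 M - 1) + M % 2 ^ (Nat.log 2 M - 1)) l = Nat.testBit M l := by
  set b := Nat.log 2 M with hbd
  have hmod : M % 2 ^ (b - 1) < 2 ^ (b - 1) := Nat.mod_lt _ (Nat.two_pow_pos _)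
  have hpow : (2:ℕ) ^ (b - 1) * 2 = 2 ^ b := by rw [← pow_succ]; congr 1; omega
  have hMk_pow : 2 ^ (b - 1) + M % 2 ^ (b - 1) < 2 ^ b := by omega
  have h1 : 1 ≤ 2 ^ (b - 1) + M % 2 ^ (b - 1) :=
    le_trans Nat.one_le_two_pow (Nat.le_add_right _ _)
  have h2 : 2 ^ (b - 1) + M % 2 ^ (b - 1) < M :=
    lt_of_lt_of_le hMk_pow (Nat.pow_log_le_self 2 (by omega))
  refine ⟨h1, h2, ?_, ?_⟩
  · apply Nat.log_eq_of_pow_le_of_lt_pow (Nat.le_add_right _ _)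
    rw [show b - 1 + 1 = b by omega]
    exact hMk_pow
  · intro l hl
    rw [Nat.testBit_two_pow_add_gt hl, Nat.testBit_mod_two_pow]
    simp [hl]

lemma restr_set {n : ℕ} (j : Fin (2 ^ n - 1)) (hj : j.val ≠ 0) :
    {v : Fin n × Fin 3 | v ∈ FF n j ∧ ∃ k, k < j ∧ (FF n j).erase v ⊆ FF n k}
      = {v : Fin n × Fin 3 | (v.2.val = 2 ∧ v.1.val = Nat.log 2 (j.val + 1)) ∨
          (v.2.val = 1 ∧ v.1.val < Nat.log 2 (j.val + 1) ∧
            Nat.testBit (j.val + 1) v.1.val = true)} := by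
  set M := j.val + 1 with hMd
  set b := Nat.log 2 M with hbd
  have hM2 : 2 ≤ M := by omega
  have hMlt : M < 2 ^ n := FF_M_lt j
  have hbn : b < n := FF_log_lt j
  have hb1 : 1 ≤ b := by
    by_contra hc
    have hb0 : b = 0 := by omega
    have := Nat.lt_pow_succ_log_self (b := 2) one_lt_two M
    rw [← hbd, hb0] at this
    norm_num at this
    omega
  have hFFj : FF n j = fac n b (fun l => Nat.testBit M l) := rfl
  have hbitb : Nat.testBit M b = true := testBit_log (by omega)
  ext ⟨iv, c⟩
  simp only [Set.mem_setOf_eq]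
  constructor
  · rintro ⟨hv, k, hkj, hsub⟩
    set Mk := k.val + 1 with hMkd
    set a := Nat.log 2 Mk with had
    have hMk_lt : Mk < M := by
      have : k.val < j.val := hkj
      omega
    have hFFk : FF n k = fac n a (fun l => Nat.testBit Mk l) := rfl
    have hab : a ≤ b := Nat.log_mono_right (by omega)
    have han : a < n := FF_log_lt k
    have hMkM : Mk ≠ M := by omega
    have hbita : Nat.testBit Mk a = true := testBit_log (by omega)
    -- transfer of z vertices
    have hz : ∀ l (hl : l < n), l ≤ b → ((⟨l, hl⟩ : Fin n), 2) ≠ ((iv, c) : Fin n × Fin 3) →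
        l ≤ a := by
      intro l hl hlb hne
      have hmem : ((⟨l, hl⟩ : Fin n), 2) ∈ FF n j := by rw [hFFj]; exact mem_fac_z.mpr hlb
      have := hsub (Finset.mem_erase.mpr ⟨hne, hmem⟩)
      rw [hFFk, mem_fac_z] at this
      exact this
    fin_cases c
    · -- c = 0 : derive contradiction
      exfalso
      rw [show (((iv, (fun i => i) (⟨0, by omega⟩ : Fin 3))) : Fin n × Fin 3) = (iv, 0)
        from rfl] at hv hsub
      have haeq : a = b := by
        have := hz b hbn le_rfl (by
          intro h
          exact absurd (congrArg (fun p : Fin n × Fin 3 => p.2.val) h) (by simp))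
        omega
      have hbiteq : ∀ l, l ≠ iv.val → Nat.testBit Mk l = Nat.testBit M l := by
        intro l hlv
        rcases lt_or_ge l b with hlb | hlb
        · have hln : l < n := by omega
          rw [hFFj] at hv
          cases hMl : Nat.testBit M l
          · have hmem : ((⟨l, hln⟩ : Fin n), 0) ∈ FF n j := by
              rw [hFFj]; exact mem_fac_x.mpr (Or.inr hMl)
            have hne : ((⟨l, hln⟩ : Fin n), 0) ≠ ((iv, 0) : Fin n × Fin 3) := by
              intro h
              exact hlv (show l = iv.val from congrArg Fin.val (Prod.ext_iff.mp h).1)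
            have := hsub (Finset.mem_erase.mpr ⟨hne, hmem⟩)
            rw [hFFk, mem_fac_x] at this
            rcases this with h | h
            · exact absurd (show a ≤ l from h) (by omega)
            · exact (show Nat.testBit Mk l = false from h)
          · have hmem : ((⟨l, hln⟩ : Fin n), 1) ∈ FF n j := by
              rw [hFFj]; exact mem_fac_y.mpr (Or.inr hMl)
            have hne : ((⟨l, hln⟩ : Fin n), 1) ≠ ((iv, 0) : Fin n × Fin 3) := by
              intro h
              exact absurd (congrArg (fun p : Fin n × Fin 3 => p.2.val) h) (by simp)
            have := hsub (Finset.mem_erase.mpr ⟨hne, hmem⟩)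
            rw [hFFk, mem_fac_y] at this
            rcases this with h | h
            · exact absurd (show a ≤ l from h) (by omega)
            · exact (show Nat.testBit Mk l = true from h)
        · rcases eq_or_lt_of_le hlb with rfl | hlb'
          · rw [hbitb]
            rw [haeq] at hbita
            exact hbita
          · rw [testBit_false_of_log_lt (by omega), testBit_false_of_log_lt (by omega)]
      -- the pair (iv, 1) might not transfer. Use x-vertex color-2 argument:
      -- v = (iv, 0). For l = iv.val with l < b : can't transfer. Determine bit at iv.
      have hMtrue : iv.val < b ∧ Nat.testBit M iv.val = true := by
        by_cases hivb : iv.val < b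
        · constructor
          · exact hivb
          · by_contra hMiv
            have hMiv' : Nat.testBit M iv.val = false := by
              cases h : Nat.testBit M iv.val
              · rfl
              · exact absurd h hMiv
            -- then (iv,0) ∈ FF j ; but also bits differ at iv only, and Mk < M forces bit M iv true
            have hdiff : Nat.testBit Mk iv.val ≠ Nat.testBit M iv.val := by
              intro h
              apply hMkM
              apply Nat.eq_of_testBit_eq
              intro l
              rcases eq_or_ne l iv.val with rfl | hl
              · exact h
              · exact hbiteq l hl
            have hMkiv : Nat.testBit Mk iv.val = true := by
              cases h : Nat.testBit Mk iv.val
              · rw [h, hMiv'] at hdiff; exact absurd rfl hdiff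
              · rfl
            have : M < Mk := Nat.lt_of_testBit iv.val hMiv' hMkiv
              (fun l hl => (hbiteq l (by omega)).symm)
            omega
        · exfalso
          apply hMkM
          apply Nat.eq_of_testBit_eq
          intro l
          rcases eq_or_ne l iv.val with rfl | hl
          · -- l = iv.val ≥ b
            rcases eq_or_lt_of_le (Nat.le_of_not_gt hivb) with h | h
            · rw [← h, hbitb]
              rw [haeq] at hbita
              exact hbita
            · rw [testBit_false_of_log_lt (by omega), testBit_false_of_log_lt (by omega)]
          · exact hbiteq l hl
      -- now v = (iv,0) ∈ FF j means b ≤ iv ∨ bit M iv = false; contradiction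
      rw [hFFj, mem_fac_x] at hv
      rcases hv with h | h
      · omega
      · rw [hMtrue.2] at h; exact absurd h (by simp)
    · -- c = 1 : conclude right branch
      rw [show (((iv, (fun i => i) (⟨1, by omega⟩ : Fin 3))) : Fin n × Fin 3) = (iv, 1)
        from rfl] at hv hsub
      right
      refine ⟨rfl, ?_⟩
      have haeq : a = b := by
        have := hz b hbn le_rfl (by
          intro h
          exact absurd (congrArg (fun p : Fin n × Fin 3 => p.2.val) h) (by simp))
        omega
      have hbiteq : ∀ l, l ≠ iv.val → Nat.testBit Mk l = Nat.testBit M l := by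
        intro l hlv
        rcases lt_or_ge l b with hlb | hlb
        · have hln : l < n := by omega
          cases hMl : Nat.testBit M l
          · have hmem : ((⟨l, hln⟩ : Fin n), 0) ∈ FF n j := by
              rw [hFFj]; exact mem_fac_x.mpr (Or.inr hMl)
            have hne : ((⟨l, hln⟩ : Fin n), 0) ≠ ((iv, 1) : Fin n × Fin 3) := by
              intro h
              exact absurd (congrArg (fun p : Fin n × Fin 3 => p.2.val) h) (by simp)
            have := hsub (Finset.mem_erase.mpr ⟨hne, hmem⟩)
            rw [hFFk, mem_fac_x] at this
            rcases this with h | h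
            · exact absurd (show a ≤ l from h) (by omega)
            · exact (show Nat.testBit Mk l = false from h)
          · have hmem : ((⟨l, hln⟩ : Fin n), 1) ∈ FF n j := by
              rw [hFFj]; exact mem_fac_y.mpr (Or.inr hMl)
            have hne : ((⟨l, hln⟩ : Fin n), 1) ≠ ((iv, 1) : Fin n × Fin 3) := by
              intro h
              exact hlv (show l = iv.val from congrArg Fin.val (Prod.ext_iff.mp h).1)
            have := hsub (Finset.mem_erase.mpr ⟨hne, hmem⟩)
            rw [hFFk, mem_fac_y] at this
            rcases this with h | h
            · exact absurd (show a ≤ l from h) (by omega)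
            · exact (show Nat.testBit Mk l = true from h)
        · rcases eq_or_lt_of_le hlb with rfl | hlb'
          · rw [hbitb]
            rw [haeq] at hbita
            exact hbita
          · rw [testBit_false_of_log_lt (by omega), testBit_false_of_log_lt (by omega)]
      by_cases hivb : iv.val < b
      · refine ⟨hivb, ?_⟩
        by_contra hMiv
        have hMiv' : Nat.testBit M iv.val = false := by
          cases h : Nat.testBit M iv.val
          · rfl
          · exact absurd h hMiv
        have hdiff : Nat.testBit Mk iv.val ≠ Nat.testBit M iv.val := by
          intro h
          apply hMkM
          apply Nat.eq_of_testBit_eq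
          intro l
          rcases eq_or_ne l iv.val with rfl | hl
          · exact h
          · exact hbiteq l hl
        have hMkiv : Nat.testBit Mk iv.val = true := by
          cases h : Nat.testBit Mk iv.val
          · rw [h, hMiv'] at hdiff; exact absurd rfl hdiff
          · rfl
        have : M < Mk := Nat.lt_of_testBit iv.val hMiv' hMkiv
          (fun l hl => (hbiteq l (by omega)).symm)
        omega
      · exfalso
        apply hMkM
        apply Nat.eq_of_testBit_eq
        intro l
        rcases eq_or_ne l iv.val with rfl | hl
        · rcases eq_or_lt_of_le (Nat.le_of_not_gt hivb) with h | h
          · rw [← h, hbitb]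
            rw [haeq] at hbita
            exact hbita
          · rw [testBit_false_of_log_lt (by omega), testBit_false_of_log_lt (by omega)]
        · exact hbiteq l hl
    · -- c = 2 : conclude left branch, i.e. iv.val = b
      rw [show (((iv, (fun i => i) (⟨2, by omega⟩ : Fin 3))) : Fin n × Fin 3) = (iv, 2)
        from rfl] at hv hsub
      left
      refine ⟨rfl, ?_⟩
      rw [hFFj, mem_fac_z] at hv
      by_contra hivb'
      have hivb : iv.val < b := by omega
      have haeq : a = b := by
        have := hz b hbn le_rfl (by
          intro h
          have hb' : b = iv.val := congrArg (fun p : Fin n × Fin 3 => p.1.val) h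
          omega)
        omega
      apply hMkM
      apply Nat.eq_of_testBit_eq
      intro l
      rcases lt_or_ge l b with hlb | hlb
      · have hln : l < n := by omega
        cases hMl : Nat.testBit M l
        · have hmem : ((⟨l, hln⟩ : Fin n), 0) ∈ FF n j := by
            rw [hFFj]; exact mem_fac_x.mpr (Or.inr hMl)
          have hne : ((⟨l, hln⟩ : Fin n), 0) ≠ ((iv, 2) : Fin n × Fin 3) := by
            intro h
            exact absurd (congrArg (fun p : Fin n × Fin 3 => p.2.val) h) (by simp)
          have := hsub (Finset.mem_erase.mpr ⟨hne, hmem⟩)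
          rw [hFFk, mem_fac_x] at this
          rcases this with h | h
          · exact absurd (show a ≤ l from h) (by omega)
          · exact (show Nat.testBit Mk l = false from h)
        · have hmem : ((⟨l, hln⟩ : Fin n), 1) ∈ FF n j := by
            rw [hFFj]; exact mem_fac_y.mpr (Or.inr hMl)
          have hne : ((⟨l, hln⟩ : Fin n), 1) ≠ ((iv, 2) : Fin n × Fin 3) := by
            intro h
            exact absurd (congrArg (fun p : Fin n × Fin 3 => p.2.val) h) (by simp)
          have := hsub (Finset.mem_erase.mpr ⟨hne, hmem⟩)
          rw [hFFk, mem_fac_y] at this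
          rcases this with h | h
          · exact absurd (show a ≤ l from h) (by omega)
          · exact (show Nat.testBit Mk l = true from h)
      · rcases eq_or_lt_of_le hlb with rfl | hlb'
        · rw [hbitb]
          rw [haeq] at hbita
          exact hbita
        · rw [testBit_false_of_log_lt (by omega), testBit_false_of_log_lt (by omega)]
  · rintro (⟨hc, hivb⟩ | ⟨hc, hivb, hbitiv⟩)
    · -- v = (iv, 2) with iv.val = b : use the "drop top z" facet
      obtain ⟨h1, h2, h3, h4⟩ := down_facts (M := M) hb1 (by omega)
      set Mk := 2 ^ (b - 1) + M % 2 ^ (b - 1) with hMkd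
      refine ⟨?_, ⟨Mk - 1, by omega⟩, by simp [Fin.lt_def]; omega, ?_⟩
      · rw [hFFj]
        have : c = 2 := Fin.ext hc
        rw [this, mem_fac_z, hivb]
      · have hFk : FF n ⟨Mk - 1, by omega⟩ = fac n (b - 1) (fun l => Nat.testBit M l) := by
          show Fm n (Mk - 1 + 1) = _
          rw [show Mk - 1 + 1 = Mk by omega, Fm_def, h3]
          exact fac_congr (fun l hl => h4 l hl)
        rw [hFk]
        intro w hw
        rw [Finset.mem_erase] at hw
        obtain ⟨hwne, hwmem⟩ := hw
        obtain ⟨iw, cw⟩ := w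
        rw [hFFj] at hwmem
        have hc2 : c = 2 := Fin.ext hc
        fin_cases cw
        · rw [show (((iw, (fun i => i) (⟨0, by omega⟩ : Fin 3))) : Fin n × Fin 3) = (iw, 0)
            from rfl] at *
          rw [mem_fac_x] at hwmem ⊢
          rcases hwmem with h | h
          · left; omega
          · right; exact h
        · rw [show (((iw, (fun i => i) (⟨1, by omega⟩ : Fin 3))) : Fin n × Fin 3) = (iw, 1)
            from rfl] at *
          rw [mem_fac_y] at hwmem ⊢
          rcases hwmem with h | h
          · left; omega
          · right; exact h
        · rw [show (((iw, (fun i => i) (⟨2, by omega⟩ : Fin 3))) : Fin n × Fin 3) = (iw, 2)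
            from rfl] at *
          rw [mem_fac_z] at hwmem ⊢
          have : iw.val ≠ b := by
            intro h
            apply hwne
            rw [hc2]
            have : iw = iv := Fin.ext (by omega)
            rw [this]
          omega
    · -- v = (iv, 1) with iv.val < b and bit set : use the "flip bit" facet
      obtain ⟨hbitk, h1, h2, h3⟩ := flip_facts (M := M) (by omega) (by omega) hbitiv
      set Mk := M ^^^ 2 ^ iv.val with hMkd
      refine ⟨?_, ⟨Mk - 1, by omega⟩, by simp [Fin.lt_def]; omega, ?_⟩
      · rw [hFFj]
        have : c = 1 := Fin.ext hc
        rw [this, mem_fac_y]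
        exact Or.inr hbitiv
      · have hFk : FF n ⟨Mk - 1, by omega⟩ = fac n b (fun l => Nat.testBit Mk l) := by
          show Fm n (Mk - 1 + 1) = _
          rw [show Mk - 1 + 1 = Mk by omega, Fm_def, h3]
        rw [hFk]
        intro w hw
        rw [Finset.mem_erase] at hw
        obtain ⟨hwne, hwmem⟩ := hw
        obtain ⟨iw, cw⟩ := w
        rw [hFFj] at hwmem
        have hc1 : c = 1 := Fin.ext hc
        fin_cases cw
        · rw [show (((iw, (fun i => i) (⟨0, by omega⟩ : Fin 3))) : Fin n × Fin 3) = (iw, 0)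
            from rfl] at *
          rw [mem_fac_x] at hwmem ⊢
          rcases hwmem with h | h
          · left; exact h
          · right
            rw [hbitk]
            rcases eq_or_ne iw.val iv.val with he | he
            · simp [he]
            · simp [he, h]
        · rw [show (((iw, (fun i => i) (⟨1, by omega⟩ : Fin 3))) : Fin n × Fin 3) = (iw, 1)
            from rfl] at *
          rw [mem_fac_y] at hwmem ⊢
          have hne' : iw.val ≠ iv.val := by
            intro h
            apply hwne
            rw [hc1]
            have : iw = iv := Fin.ext h
            rw [this]
          rcases hwmem with h | h
          · left; exact h
          · right
            rw [hbitk]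
            simp [hne', h]
        · rw [show (((iw, (fun i => i) (⟨2, by omega⟩ : Fin 3))) : Fin n × Fin 3) = (iw, 2)
            from rfl] at *
          rw [mem_fac_z] at hwmem ⊢
          exact hwmem

def pc (n M : ℕ) : ℕ := ((Finset.range n).filter (fun l => Nat.testBit M l = true)).card

lemma pc_split {n M : ℕ} (h1 : 1 ≤ M) (h2 : M < 2 ^ n) :
    pc n M = ((Finset.range (Nat.log 2 M)).filter (fun l => Nat.testBit M l = true)).card
      + 1 := by
  set b := Nat.log 2 M with hbd
  have hbn : b < n := log_lt_of_lt_pow h1 h2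
  have hsplit : (Finset.range n).filter (fun l => Nat.testBit M l = true)
      = insert b ((Finset.range b).filter (fun l => Nat.testBit M l = true)) := by
    ext l
    simp only [Finset.mem_filter, Finset.mem_insert, Finset.mem_range]
    constructor
    · rintro ⟨hln, hbit⟩
      rcases lt_trichotomy l b with h | h | h
      · exact Or.inr ⟨h, hbit⟩
      · exact Or.inl h
      · rw [testBit_false_of_log_lt h] at hbit; exact absurd hbit (by simp)
    · rintro (rfl | ⟨hlb, hbit⟩)
      · exact ⟨hbn, testBit_log (by omega)⟩
      · exact ⟨by omega, hbit⟩
  rw [pc, hsplit, Finset.card_insert_of_notMem (by simp)]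

lemma restrNum_FF {n : ℕ} (j : Fin (2 ^ n - 1)) :
    restrNum (FF n) j = if j.val = 0 then 0 else pc n (j.val + 1) := by
  classical
  rcases eq_or_ne j.val 0 with hj | hj
  · rw [if_pos hj, restrNum]
    convert Set.ncard_empty (Fin n × Fin 3)
    ext v
    simp only [Set.mem_setOf_eq, Set.mem_empty_iff_false, iff_false, not_and]
    rintro - ⟨k, hk, -⟩
    have : k.val < j.val := hk
    omega
  · rw [if_neg hj, restrNum, restr_set j hj]
    set M := j.val + 1 with hMd
    set b := Nat.log 2 M with hbd
    have hbn : b < n := FF_log_lt j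
    have hset : {v : Fin n × Fin 3 | (v.2.val = 2 ∧ v.1.val = b) ∨
        (v.2.val = 1 ∧ v.1.val < b ∧ Nat.testBit M v.1.val = true)}
        = ↑(Finset.univ.filter (fun v : Fin n × Fin 3 => (v.2.val = 2 ∧ v.1.val = b) ∨
            (v.2.val = 1 ∧ v.1.val < b ∧ Nat.testBit M v.1.val = true))) := by
      ext v; simp
    rw [hset, Set.ncard_coe_finset]
    rw [pc_split (by omega) (FF_M_lt j)]
    rw [← Finset.card_insert_of_notMem (show b ∉ (Finset.range b).filter
        (fun l => Nat.testBit M l = true) by simp)]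
    apply Finset.card_bij (fun v _ => if v.2.val = 2 then b else v.1.val)
    · rintro v hv
      rw [Finset.mem_filter] at hv
      rcases hv.2 with ⟨h2, h1⟩ | ⟨h2, h1, h3⟩
      · rw [if_pos h2]; exact Finset.mem_insert_self _ _
      · rw [if_neg (by omega)]
        exact Finset.mem_insert_of_mem (Finset.mem_filter.mpr ⟨Finset.mem_range.mpr h1, h3⟩)
    · rintro v hv w hw heq
      rw [Finset.mem_filter] at hv hw
      rcases hv.2 with ⟨hv2, hv1⟩ | ⟨hv2, hv1, hv3⟩ <;>
        rcases hw.2 with ⟨hw2, hw1⟩ | ⟨hw2, hw1, hw3⟩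
      · rw [if_pos hv2, if_pos hw2] at heq
        have e1 : v.1 = w.1 := Fin.ext (by omega)
        have e2 : v.2 = w.2 := Fin.ext (by omega)
        exact Prod.ext e1 e2
      · rw [if_pos hv2, if_neg (by omega)] at heq
        omega
      · rw [if_neg (by omega), if_pos hw2] at heq
        omega
      · rw [if_neg (by omega), if_neg (by omega)] at heq
        have e1 : v.1 = w.1 := Fin.ext heq
        have e2 : v.2 = w.2 := Fin.ext (by omega)
        exact Prod.ext e1 e2
    · intro m hm
      rw [Finset.mem_insert] at hm
      rcases hm with rfl | hm
      · refine ⟨((⟨b, hbn⟩ : Fin n), 2), ?_, by simp⟩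
        rw [Finset.mem_filter]
        exact ⟨Finset.mem_univ _, Or.inl ⟨rfl, rfl⟩⟩
      · rw [Finset.mem_filter, Finset.mem_range] at hm
        refine ⟨((⟨m, by omega⟩ : Fin n), 1), ?_, by simp⟩
        rw [Finset.mem_filter]
        exact ⟨Finset.mem_univ _, Or.inr ⟨rfl, hm.1, hm.2⟩⟩

lemma card_filter_fin (N : ℕ) (p : ℕ → Prop) [DecidablePred p] :
    (Finset.univ.filter (fun j : Fin N => p j.val)).card
      = ((Finset.range N).filter p).card := by
  apply Finset.card_bij (fun j _ => j.val)
  · intro j hj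
    rw [Finset.mem_filter] at hj
    exact Finset.mem_filter.mpr ⟨Finset.mem_range.mpr j.isLt, hj.2⟩
  · intro v hv w hw heq
    exact Fin.ext heq
  · intro m hm
    rw [Finset.mem_filter, Finset.mem_range] at hm
    exact ⟨⟨m, hm.1⟩, Finset.mem_filter.mpr ⟨Finset.mem_univ _, hm.2⟩, rfl⟩

lemma pc_count (n i : ℕ) :
    ((Finset.range (2 ^ n)).filter (fun M => pc n M = i)).card = n.choose i := by
  classical
  have hrhs : n.choose i = ((Finset.range n).powersetCard i).card := by
    rw [Finset.card_powersetCard, Finset.card_range]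
  rw [hrhs]
  apply Finset.card_bij (fun M _ => (Finset.range n).filter (fun l => Nat.testBit M l = true))
  · intro M hM
    rw [Finset.mem_filter] at hM
    exact Finset.mem_powersetCard.mpr ⟨Finset.filter_subset _ _, hM.2⟩
  · intro M hM M' hM' heq
    rw [Finset.mem_filter, Finset.mem_range] at hM hM'
    apply Nat.eq_of_testBit_eq
    intro l
    rcases lt_or_ge l n with hln | hln
    · have h1 : l ∈ (Finset.range n).filter (fun l => Nat.testBit M l = true)
          ↔ l ∈ (Finset.range n).filter (fun l => Nat.testBit M' l = true) := by rw [heq]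
      simp only [Finset.mem_filter, Finset.mem_range, hln, true_and] at h1
      cases h : Nat.testBit M l <;> cases h' : Nat.testBit M' l <;> simp_all
    · rw [Nat.testBit_lt_two_pow (lt_of_lt_of_le hM.1 (Nat.pow_le_pow_right (by norm_num) hln)),
        Nat.testBit_lt_two_pow (lt_of_lt_of_le hM'.1 (Nat.pow_le_pow_right (by norm_num) hln))]
  · intro S hS
    rw [Finset.mem_powersetCard] at hS
    refine ⟨∑ l ∈ S, 2 ^ l, ?_, ?_⟩
    · rw [Finset.mem_filter, Finset.mem_range]
      constructor
      · exact sum_pow_lt hS.1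
      · rw [pc]
        have : (Finset.range n).filter (fun l => Nat.testBit (∑ l ∈ S, 2 ^ l) l = true) = S := by
          ext l
          simp only [Finset.mem_filter, Finset.mem_range, testBit_sum_pow, decide_eq_true_eq]
          constructor
          · rintro ⟨-, h⟩; exact h
          · intro h; exact ⟨Finset.mem_range.mp (hS.1 h), h⟩
        rw [this, hS.2]
    · ext l
      simp only [Finset.mem_filter, Finset.mem_range, testBit_sum_pow, decide_eq_true_eq]
      constructor
      · rintro ⟨-, h⟩; exact h
      · intro h; exact ⟨Finset.mem_range.mp (hS.1 h), h⟩

lemma pc_zero (n : ℕ) : pc n 0 = 0 := by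
  rw [pc]
  convert Finset.card_empty
  ext l
  simp

lemma pc_one {n : ℕ} (hn : 1 ≤ n) : pc n 1 = 1 := by
  rw [pc]
  have : (Finset.range n).filter (fun l => Nat.testBit 1 l = true) = {0} := by
    ext l
    simp only [Finset.mem_filter, Finset.mem_range, Finset.mem_singleton]
    constructor
    · rintro ⟨-, h⟩
      by_contra hl
      have : (1 : ℕ) < 2 ^ l := by
        have : 1 ≤ l := by omega
        calc (1:ℕ) < 2 ^ 1 := by norm_num
          _ ≤ 2 ^ l := Nat.pow_le_pow_right (by norm_num) this
      rw [Nat.testBit_lt_two_pow this] at h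
      exact absurd h (by simp)
    · rintro rfl
      exact ⟨by omega, by simp⟩
  rw [this]
  simp

lemma pc_pos {n M : ℕ} (h1 : 1 ≤ M) (h2 : M < 2 ^ n) : 1 ≤ pc n M := by
  rw [pc_split h1 h2]
  omega

/-- There is a shelling of `Δₙ` whose restriction numbers satisfy
`#{j : r_j = i} = C(n,i)` for `i ∈ {0, 2, 3, …, n}` and `#{j : r_j = 1} = n − 1`;
consequently `h(Δₙ) = (C(n,0), C(n,1) − 1, C(n,2), …, C(n,n))`. -/
theorem stmt_6 (n : ℕ) (hn : 2 ≤ n) :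
    ∃ F : Fin (2 ^ n - 1) → Finset (Fin n × Fin 3), IsShelling n (2 ^ n - 1) F ∧
      ∀ i : ℕ, i ≤ n →
        Set.ncard {j : Fin (2 ^ n - 1) | restrNum F j = i} =
          if i = 1 then n - 1 else n.choose i := by
  classical
  have h4 : 4 ≤ 2 ^ n := by
    calc (4:ℕ) = 2 ^ 2 := by norm_num
      _ ≤ 2 ^ n := Nat.pow_le_pow_right (by norm_num) hn
  refine ⟨FF n, ⟨FF_inj, fun G => FF_surj (by omega) G, fun i j hij => FF_shelling i j hij⟩, ?_⟩
  intro i hi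
  have hconv : {j : Fin (2 ^ n - 1) | restrNum (FF n) j = i}.ncard
      = ((Finset.range (2 ^ n - 1)).filter
          (fun m => (if m = 0 then 0 else pc n (m + 1)) = i)).card := by
    have h1 : {j : Fin (2 ^ n - 1) | restrNum (FF n) j = i}
        = ↑(Finset.univ.filter (fun j : Fin (2 ^ n - 1) =>
            (if j.val = 0 then 0 else pc n (j.val + 1)) = i)) := by
      ext j
      simp only [Set.mem_setOf_eq, Finset.coe_filter, Finset.mem_univ, true_and]
      rw [restrNum_FF]
    rw [h1, Set.ncard_coe_finset]
    exact card_filter_fin (2 ^ n - 1) (fun m => (if m = 0 then 0 else pc n (m + 1)) = i)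
  rw [hconv]
  rcases eq_or_ne i 0 with rfl | hi0
  · rw [if_neg (by norm_num), Nat.choose_zero_right]
    have hfil : (Finset.range (2 ^ n - 1)).filter
        (fun m => (if m = 0 then 0 else pc n (m + 1)) = 0) = {0} := by
      ext m
      simp only [Finset.mem_filter, Finset.mem_range, Finset.mem_singleton]
      constructor
      · rintro ⟨hm, hcond⟩
        by_contra hm0
        rw [if_neg hm0] at hcond
        have := pc_pos (n := n) (M := m + 1) (by omega) (by omega)
        omega
      · rintro rfl
        exact ⟨by omega, by simp⟩
    rw [hfil]
    simp
  · have hfe : (Finset.range (2 ^ n - 1)).filter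
        (fun m => (if m = 0 then 0 else pc n (m + 1)) = i)
        = (Finset.range (2 ^ n - 1)).filter (fun m => m ≠ 0 ∧ pc n (m + 1) = i) := by
      ext m
      simp only [Finset.mem_filter, Finset.mem_range]
      constructor
      · rintro ⟨hm, hcond⟩
        rcases eq_or_ne m 0 with rfl | hm0
        · rw [if_pos rfl] at hcond; omega
        · rw [if_neg hm0] at hcond; exact ⟨hm, hm0, hcond⟩
      · rintro ⟨hm, hm0, hcond⟩
        exact ⟨hm, by rw [if_neg hm0]; exact hcond⟩
    rw [hfe]
    have hB : ((Finset.range (2 ^ n - 1)).filter (fun m => m ≠ 0 ∧ pc n (m + 1) = i)).card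
        = ((Finset.range (2 ^ n)).filter (fun M => M ≠ 0 ∧ M ≠ 1 ∧ pc n M = i)).card := by
      apply Finset.card_bij (fun m _ => m + 1)
      · intro m hm
        rw [Finset.mem_filter, Finset.mem_range] at hm ⊢
        exact ⟨by omega, by omega, by omega, hm.2.2⟩
      · intro a _ b _ h
        omega
      · intro M hM
        rw [Finset.mem_filter, Finset.mem_range] at hM
        obtain ⟨hMlt, hM0, hM1, hpc⟩ := hM
        refine ⟨M - 1, ?_, by omega⟩
        rw [Finset.mem_filter, Finset.mem_range]
        refine ⟨by omega, by omega, ?_⟩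
        rw [show M - 1 + 1 = M by omega]
        exact hpc
    rw [hB]
    rcases eq_or_ne i 1 with rfl | hi1
    · rw [if_pos rfl]
      have hBe : (Finset.range (2 ^ n)).filter (fun M => M ≠ 0 ∧ M ≠ 1 ∧ pc n M = 1)
          = ((Finset.range (2 ^ n)).filter (fun M => pc n M = 1)).erase 1 := by
        ext M
        simp only [Finset.mem_filter, Finset.mem_range, Finset.mem_erase]
        constructor
        · rintro ⟨h1, h2, h3, h4⟩
          exact ⟨h3, h1, h4⟩
        · rintro ⟨h1, h2, h3⟩
          refine ⟨h2, ?_, h1, h3⟩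
          rintro rfl
          rw [pc_zero] at h3
          omega
      rw [hBe, Finset.card_erase_of_mem, pc_count, Nat.choose_one_right]
      rw [Finset.mem_filter, Finset.mem_range]
      exact ⟨by omega, pc_one (by omega)⟩
    · rw [if_neg hi1]
      have hBe : (Finset.range (2 ^ n)).filter (fun M => M ≠ 0 ∧ M ≠ 1 ∧ pc n M = i)
          = (Finset.range (2 ^ n)).filter (fun M => pc n M = i) := by
        ext M
        simp only [Finset.mem_filter, Finset.mem_range]
        constructor
        · rintro ⟨h1, h2, h3, h4⟩
          exact ⟨h1, h4⟩
        · rintro ⟨h1, h2⟩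
          refine ⟨h1, ?_, ?_, h2⟩
          · rintro rfl
            rw [pc_zero] at h2
            omega
          · rintro rfl
            rw [pc_one (by omega)] at h2
            omega
      rw [hBe, pc_count]
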